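/- arXiv:2601.11570 — 2 statements merged into one kernel-verified Lean document; each statement's English description precedes it below -/
import Mathlib

section
/- Let b > 0, M > 0, and let M′ ∈ ℝ satisfy |M′| ≤ M. Let p_b(s) = (1/(2b))·exp(−|s|/b) be the Laplace density with scale b. Then for all real numbers a ≤ c, ∫_{[a+M′, c+M′]} p_b(s) ds ≤ exp(M/b) · ∫_{[a, c]} p_b(s) ds; in probabilistic terms, if η ∼ Lap(b) then Pr(a + M′ ≤ η ≤ c + M′) ≤ e^{M/b} · Pr(a ≤ η ≤ c). (The paper's Lemma on Laplacian noise together with its extension to smaller shifts used in the proof of the additive-mechanism theorem.) -/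
open MeasureTheory Set

theorem setIntegral_Icc_add_right (f : ℝ → ℝ) (a c t : ℝ) :
    ∫ s in Icc (a + t) (c + t), f s = ∫ s in Icc a c, f (s + t) := by
  rw [← image_add_const_Icc]
  exact (measurePreserving_add_right volume t).setIntegral_image_emb
    (measurableEmbedding_addRight t) f (Icc a c)

theorem setIntegral_Icc_add_right_le {f : ℝ → ℝ} (hf : Continuous f) {C t : ℝ}
    (h : ∀ s, f (s + t) ≤ C * f s) (a c : ℝ) :
    ∫ s in Icc (a + t) (c + t), f s ≤ C * ∫ s in Icc a c, f s := by
  rw [setIntegral_Icc_add_right, ← integral_const_mul]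
  exact setIntegral_mono_on (hf.comp (continuous_add_const t)).integrableOn_Icc
    (continuous_const.mul hf).integrableOn_Icc measurableSet_Icc fun s _ => h s

theorem laplace_density_add_le {b M t : ℝ} (hb : 0 < b) (ht : |t| ≤ M) (s : ℝ) :
    1 / (2 * b) * Real.exp (-|s + t| / b) ≤
      Real.exp (M / b) * (1 / (2 * b) * Real.exp (-|s| / b)) := by
  have htri : |s| - |s + t| ≤ M := by
    have := abs_sub_abs_le_abs_sub s (s + t)
    rw [sub_add_cancel_left, abs_neg] at this
    linarith
  have hexp : -|s + t| / b ≤ M / b + -|s| / b := by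
    rw [← add_div]
    exact div_le_div_of_nonneg_right (by linarith) hb.le
  rw [mul_left_comm, ← Real.exp_add]
  gcongr

theorem laplace_shift_probability_bound_general (b M M' : ℝ) (hb : 0 < b)
    (hM' : |M'| ≤ M) :
    ∀ a c : ℝ, a ≤ c →
      (∫ s in Set.Icc (a + M') (c + M'), (1 / (2 * b)) * Real.exp (-|s| / b)) ≤
        Real.exp (M / b) * ∫ s in Set.Icc a c, (1 / (2 * b)) * Real.exp (-|s| / b) :=
  fun a c _ => setIntegral_Icc_add_right_le (by fun_prop) (laplace_density_add_le hb hM') a c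

/-- Laplace shift lemma: for `b > 0`, `M > 0`, `|M′| ≤ M`, and `a ≤ c`,
`Pr(a + M′ ≤ η ≤ c + M′) ≤ e^{M/b} · Pr(a ≤ η ≤ c)` for `η ∼ Lap(b)`, i.e.
`∫_{[a+M′, c+M′]} p_b(s) ds ≤ exp(M/b) · ∫_{[a, c]} p_b(s) ds` with
`p_b(s) = (1/(2b))·exp(−|s|/b)`. -/
theorem laplace_shift_probability_bound (b M M' : ℝ) (hb : 0 < b) (hM : 0 < M)
    (hM' : |M'| ≤ M) :
    ∀ a c : ℝ, a ≤ c →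
      (∫ s in Set.Icc (a + M') (c + M'), (1 / (2 * b)) * Real.exp (-|s| / b)) ≤
        Real.exp (M / b) * ∫ s in Set.Icc a c, (1 / (2 * b)) * Real.exp (-|s| / b) :=
  laplace_shift_probability_bound_general b M M' hb hM'
end

section
/- Let u > 0, h₁, h₂ ∈ ℝ, and v₁, v₂ ∈ ℝ with v₁ ≠ 0 and v₂ ≠ 0. For i = 1, 2 let μᵢ be the law of hᵢ + γ·vᵢ where γ is uniform on [−u, u], i.e., μᵢ is the pushforward of (2u)⁻¹·(Lebesgue measure restricted to [−u, u]) under γ ↦ hᵢ + γ·vᵢ. Then for every Lebesgue-measurable set S contained in [h₂ − u·|v₂|, h₂ + u·|v₂|], μ₁(S) ≤ exp(|ln(|v₂|/|v₁|)|) · μ₂(S). (The paper's theorem that the operator B_k(z_j) = h(x̂_j) + γ_k·(f(x̂_j) + h(x̂_j)) is ε′_k-differentially private with privacy budget ε′_k = max_j |ln(|f(x̂_{j+1}) + h(x̂_{j+1})| / |f(x̂_j) + h(x̂_j)|)|, stated on output sets contained in the support of the neighboring mechanism with v₁ = f(x̂_j) + h(x̂_j) and v₂ = f(x̂_{j+1})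 + h(x̂_{j+1}).) -/
/-!
The affine map `γ ↦ h + γ v` scales Lebesgue measure by `|v|⁻¹`, so `μᵢ(S)` is at most
`(2u)⁻¹ |vᵢ|⁻¹ vol(S)`, with equality for `i = 2` once `S` lies in the support of `μ₂`, since
then the whole preimage of `S` lies in `[-u, u]`. The ratio of the two densities is
`|v₂| / |v₁| ≤ exp |log (|v₂| / |v₁|)|`.
-/

open MeasureTheory Set

lemma Real.volume_preimage_add_mul_right (h : ℝ) {v : ℝ} (hv : v ≠ 0) (S : Set ℝ) :
    volume ((fun γ : ℝ => h + γ * v) ⁻¹' S) = ENNReal.ofReal |v⁻¹| * volume S := by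
  change volume ((· * v) ⁻¹' ((h + ·) ⁻¹' S)) = _
  rw [Real.volume_preimage_mul_right hv, measure_preimage_add]

lemma preimage_add_mul_right_subset_Icc {u h v : ℝ} (hv : v ≠ 0) {S : Set ℝ}
    (hS : S ⊆ Icc (h - u * |v|) (h + u * |v|)) :
    (fun γ : ℝ => h + γ * v) ⁻¹' S ⊆ Icc (-u) u := by
  intro γ hγ
  obtain ⟨hlo, hhi⟩ := hS hγ
  have : |γ| * |v| ≤ u * |v| := by
    rw [← abs_mul]
    exact abs_le.mpr ⟨by linarith, by linarith⟩
  exact abs_le.mp (le_of_mul_le_mul_right this (abs_pos.mpr hv))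

section AffineImage

variable (c : ENNReal) {h v : ℝ} {S : Set ℝ}

lemma map_add_mul_right_smul_restrict_apply (I : Set ℝ) (hS : MeasurableSet S) :
    Measure.map (fun γ : ℝ => h + γ * v) (c • volume.restrict I) S
      = c * volume ((fun γ : ℝ => h + γ * v) ⁻¹' S ∩ I) := by
  have hf : Measurable fun γ : ℝ => h + γ * v := by fun_prop
  rw [Measure.map_apply hf hS, Measure.smul_apply, smul_eq_mul,
    Measure.restrict_apply (hf hS)]

lemma map_add_mul_right_smul_restrict_apply_le (I : Set ℝ) (hv : v ≠ 0)
    (hS : MeasurableSet S) :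
    Measure.map (fun γ : ℝ => h + γ * v) (c • volume.restrict I) S
      ≤ c * (ENNReal.ofReal |v⁻¹| * volume S) := by
  rw [map_add_mul_right_smul_restrict_apply c I hS,
    ← Real.volume_preimage_add_mul_right h hv S]
  gcongr
  exact inter_subset_left

lemma map_add_mul_right_smul_restrict_Icc_apply_of_subset {u : ℝ} (hv : v ≠ 0)
    (hS : MeasurableSet S) (hS_supp : S ⊆ Icc (h - u * |v|) (h + u * |v|)) :
    Measure.map (fun γ : ℝ => h + γ * v) (c • volume.restrict (Icc (-u) u)) S
      = c * (ENNReal.ofReal |v⁻¹| * volume S) := by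
  rw [map_add_mul_right_smul_restrict_apply c _ hS,
    inter_eq_left.mpr (preimage_add_mul_right_subset_Icc hv hS_supp),
    Real.volume_preimage_add_mul_right h hv S]

end AffineImage

lemma Real.le_exp_abs_log (x : ℝ) : x ≤ Real.exp |Real.log x| :=
  (Real.le_exp_log x).trans (Real.exp_le_exp.mpr (le_abs_self _))

lemma Real.abs_inv_le_exp_abs_log_div_mul_abs_inv {a b : ℝ} (hb : b ≠ 0) :
    |a⁻¹| ≤ Real.exp |Real.log (|b| / |a|)| * |b⁻¹| := by
  have hb' : 0 < |b⁻¹| := abs_pos.mpr (inv_ne_zero hb)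
  calc |a⁻¹| = |b| / |a| * |b⁻¹| := by
        rw [abs_inv, abs_inv, div_mul_eq_mul_div, mul_inv_cancel₀ (abs_ne_zero.mpr hb),
          one_div]
    _ ≤ Real.exp |Real.log (|b| / |a|)| * |b⁻¹| := by gcongr; exact Real.le_exp_abs_log _

theorem multiplicative_mechanism_diff_private_general (u h₁ h₂ v₁ v₂ : ℝ)
    (hv₁ : v₁ ≠ 0) (hv₂ : v₂ ≠ 0)
    (μ₁ μ₂ : Measure ℝ)
    (hμ₁ : μ₁ = Measure.map (fun γ : ℝ => h₁ + γ * v₁)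
        ((ENNReal.ofReal (2 * u))⁻¹ • volume.restrict (Set.Icc (-u) u)))
    (hμ₂ : μ₂ = Measure.map (fun γ : ℝ => h₂ + γ * v₂)
        ((ENNReal.ofReal (2 * u))⁻¹ • volume.restrict (Set.Icc (-u) u))) :
    ∀ S : Set ℝ, MeasurableSet S →
      S ⊆ Set.Icc (h₂ - u * |v₂|) (h₂ + u * |v₂|) →
        μ₁ S ≤ ENNReal.ofReal (Real.exp |Real.log (|v₂| / |v₁|)|) * μ₂ S := by
  intro S hS hS_supp
  set c := (ENNReal.ofReal (2 * u))⁻¹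
  have density_le : ENNReal.ofReal |v₁⁻¹|
      ≤ ENNReal.ofReal (Real.exp |Real.log (|v₂| / |v₁|)|) * ENNReal.ofReal |v₂⁻¹| := by
    rw [← ENNReal.ofReal_mul (Real.exp_pos _).le]
    exact ENNReal.ofReal_le_ofReal (Real.abs_inv_le_exp_abs_log_div_mul_abs_inv hv₂)
  rw [hμ₁, hμ₂, map_add_mul_right_smul_restrict_Icc_apply_of_subset c hv₂ hS hS_supp]
  calc _ ≤ c * (ENNReal.ofReal |v₁⁻¹| * volume S) :=
        map_add_mul_right_smul_restrict_apply_le c _ hv₁ hS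
    _ ≤ c * (ENNReal.ofReal (Real.exp |Real.log (|v₂| / |v₁|)|) * ENNReal.ofReal |v₂⁻¹|
          * volume S) := by gcongr
    _ = _ := by ring

/-- Differential privacy of the multiplicative-noise mechanism: let `γ` be uniform on
`[−u, u]` (`u > 0`), and for `i = 1, 2` let `μᵢ` be the law of `hᵢ + γ·vᵢ` with `vᵢ ≠ 0`.
Then for every measurable `S` contained in the support `[h₂ − u·|v₂|, h₂ + u·|v₂|]` of
`μ₂`, one has `μ₁(S) ≤ exp(|ln(|v₂|/|v₁|)|) · μ₂(S)`. -/
theorem multiplicative_mechanism_diff_private (u h₁ h₂ v₁ v₂ : ℝ) (hu : 0 < u)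
    (hv₁ : v₁ ≠ 0) (hv₂ : v₂ ≠ 0)
    (μ₁ μ₂ : Measure ℝ)
    (hμ₁ : μ₁ = Measure.map (fun γ : ℝ => h₁ + γ * v₁)
        ((ENNReal.ofReal (2 * u))⁻¹ • volume.restrict (Set.Icc (-u) u)))
    (hμ₂ : μ₂ = Measure.map (fun γ : ℝ => h₂ + γ * v₂)
        ((ENNReal.ofReal (2 * u))⁻¹ • volume.restrict (Set.Icc (-u) u))) :
    ∀ S : Set ℝ, MeasurableSet S →
      S ⊆ Set.Icc (h₂ - u * |v₂|) (h₂ + u * |v₂|) →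
        μ₁ S ≤ ENNReal.ofReal (Real.exp |Real.log (|v₂| / |v₁|)|) * μ₂ S :=
  multiplicative_mechanism_diff_private_general u h₁ h₂ v₁ v₂ hv₁ hv₂ μ₁ μ₂ hμ₁ hμ₂
end
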